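/- Let τ be a fuzzy soft topology. For any fuzzy soft set g, the fuzzy soft semi-interior ssint(g) is the largest semiopen fuzzy soft set contained in g: that is, ssint(g) ≤ g, ssint(g) is semiopen, and for every semiopen fuzzy soft set s with s ≤ g one has s ≤ ssint(g). -/

import Mathlib

open unitInterval

instance : Fact ((0:ℝ) ≤ 1) := ⟨zero_le_one⟩

/-- A fuzzy soft set over universe `U` with parameter set `E`. -/
def FuzzySoftSet (E U : Type*) : Type _ := E → U → unitInterval

noncomputable instance {E U : Type*} : CompleteLattice (FuzzySoftSet E U) :=
  inferInstanceAs (CompleteLattice (E → U → unitInterval))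

/-- Complement of a fuzzy soft set: `f^c e x = 1 - f e x`. -/
def FuzzySoftSet.compl {E U : Type*} (f : FuzzySoftSet E U) : FuzzySoftSet E U :=
  fun e x => unitInterval.symm (f e x)

/-- A fuzzy soft topology: contains the constant-0 and constant-1 fuzzy soft sets,
is closed under pairwise pointwise minimum, and under pointwise suprema of subfamilies. -/
structure FuzzySoftTopology (E U : Type*) where
  opens : Set (FuzzySoftSet E U)
  bot_mem : (⊥ : FuzzySoftSet E U) ∈ opens
  top_mem : (⊤ : FuzzySoftSet E U) ∈ opens
  inf_mem : ∀ g h : FuzzySoftSet E U, g ∈ opens → h ∈ opens → g ⊓ h ∈ opens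
  sSup_mem : ∀ s : Set (FuzzySoftSet E U), s ⊆ opens → sSup s ∈ opens

namespace FuzzySoftTopology

variable {E U : Type*}

/-- `g` is an open fuzzy soft set. -/
def IsOpen (t : FuzzySoftTopology E U) (g : FuzzySoftSet E U) : Prop := g ∈ t.opens

/-- `g` is a closed fuzzy soft set: its complement is open. -/
def IsClosed (t : FuzzySoftTopology E U) (g : FuzzySoftSet E U) : Prop := t.IsOpen g.compl

/-- Interior: supremum of all open fuzzy soft sets below `g`. -/
noncomputable def interior (t : FuzzySoftTopology E U) (g : FuzzySoftSet E U) : FuzzySoftSet E U :=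
  sSup {h | t.IsOpen h ∧ h ≤ g}

/-- Closure: infimum of all closed fuzzy soft sets above `g`. -/
noncomputable def closure (t : FuzzySoftTopology E U) (g : FuzzySoftSet E U) : FuzzySoftSet E U :=
  sInf {h | t.IsClosed h ∧ g ≤ h}

/-- `g` is semiopen: there is an open `h` with `h ≤ g ≤ cl h`. -/
def SemiOpen (t : FuzzySoftTopology E U) (g : FuzzySoftSet E U) : Prop :=
  ∃ h : FuzzySoftSet E U, t.IsOpen h ∧ h ≤ g ∧ g ≤ t.closure h

/-- `g` is semiclosed: there is a closed `k` with `int k ≤ g ≤ k`. -/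
def SemiClosed (t : FuzzySoftTopology E U) (g : FuzzySoftSet E U) : Prop :=
  ∃ k : FuzzySoftSet E U, t.IsClosed k ∧ t.interior k ≤ g ∧ g ≤ k

/-- Fuzzy soft semi-closure: infimum of all semiclosed fuzzy soft sets above `g`. -/
noncomputable def sscl (t : FuzzySoftTopology E U) (g : FuzzySoftSet E U) : FuzzySoftSet E U :=
  sInf {s | t.SemiClosed s ∧ g ≤ s}

/-- Fuzzy soft semi-interior: supremum of all semiopen fuzzy soft sets below `g`. -/
noncomputable def ssint (t : FuzzySoftTopology E U) (g : FuzzySoftSet E U) : FuzzySoftSet E U :=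
  sSup {s | t.SemiOpen s ∧ s ≤ g}

end FuzzySoftTopology

/-- A fuzzy soft point: nonzero at exactly one parameter. -/
def FuzzySoftSet.IsPoint {E U : Type*} (p : FuzzySoftSet E U) : Prop :=
  ∃ e₀ : E, p e₀ ≠ (fun _ => 0) ∧ ∀ e : E, e ≠ e₀ → p e = fun _ => 0

namespace FuzzySoftTopology

variable {E U : Type*} (t : FuzzySoftTopology E U)

theorem closure_mono {a b : FuzzySoftSet E U} (h : a ≤ b) : t.closure a ≤ t.closure b :=
  sInf_le_sInf fun _ ⟨hk, hbk⟩ => ⟨hk, h.trans hbk⟩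

/-- The open witnesses of the members of `S` have as supremum an open witness for `sSup S`. -/
theorem semiOpen_sSup {S : Set (FuzzySoftSet E U)} (hS : ∀ s ∈ S, t.SemiOpen s) :
    t.SemiOpen (sSup S) := by
  choose! H hH_open hH_le hH_closure using hS
  refine ⟨sSup (H '' S), t.sSup_mem _ ?_, ?_, ?_⟩
  · rintro _ ⟨s, hs, rfl⟩
    exact hH_open s hs
  · refine sSup_le ?_
    rintro _ ⟨s, hs, rfl⟩
    exact le_sSup_of_le hs (hH_le s hs)
  · refine sSup_le fun s hs => (hH_closure s hs).trans (t.closure_mono ?_)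
    exact le_sSup (Set.mem_image_of_mem H hs)

end FuzzySoftTopology

theorem ssint_isLargest_semiOpen {E U : Type*} (t : FuzzySoftTopology E U)
    (g : FuzzySoftSet E U) :
    t.ssint g ≤ g ∧ t.SemiOpen (t.ssint g) ∧
      ∀ s : FuzzySoftSet E U, t.SemiOpen s → s ≤ g → s ≤ t.ssint g :=
  ⟨sSup_le fun _ hs => hs.2, t.semiOpen_sSup fun _ hs => hs.1,
    fun _ hs_open hs_le => le_sSup ⟨hs_open, hs_le⟩⟩
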